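/- arXiv:1012.1276 — 2 statements merged into one kernel-verified Lean document; each statement's English description precedes it below -/
import Mathlib

section
/- A classical noncrossing partition of the set {1, ..., n+1} corresponds to a positive noncrossing partition of the Coxeter group of type A_n (i.e., one not contained in any proper standard parabolic subgroup) if and only if the elements 1 and n+1 lie in the same block of the partition. -/
/-!
Write `c = π τ` with `ℓ_T(π) + ℓ_T(τ) = ℓ_T(c)`; since `ℓ_T(σ) = |α| - #cycles(σ)`, multiplying a
minimal factorisation of `τ` back onto `π` merges two cycles at every step, so going down from `c`
to `π` every step splits a cycle. The property "every arc from `x` to `σ x` is `σ`-invariant"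
holds for the rotation `c = (x ↦ x + 1)` and survives splitting a cycle, hence holds for `π`: its
cycles are noncrossing and run once around the circle.

If `0` and `n` lie in different cycles, let `m` be the largest element of the cycle of `0`. No arc
of `π` separates `0` from `m`, so `π` preserves `{0, …, m}` and lies in the parabolic subgroup
without `s_m`. Conversely, a parabolic subgroup without `s_i` preserves `{0, …, i}`, so it keeps
the cycle of `0` away from `n`.
-/

/-- The absolute length of a permutation: the minimal number of transpositions
(= reflections of the symmetric group) whose product is the permutation. -/
noncomputable def absLength {α : Type*} [DecidableEq α] [Fintype α] (π : Equiv.Perm α) : ℕ :=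
  sInf {k | ∃ l : List (Equiv.Perm α), l.length = k ∧ (∀ t ∈ l, t.IsSwap) ∧ l.prod = π}

/-- The absolute order on the symmetric group:
`u ≤_T v` iff `l_T v = l_T u + l_T (u⁻¹ v)`. -/
def absLe {α : Type*} [DecidableEq α] [Fintype α] (u v : Equiv.Perm α) : Prop :=
  absLength v = absLength u + absLength (u⁻¹ * v)

/-- The simple generators `sᵢ = (i, i+1)` of the symmetric group `S_{n+1}`,
viewed as the Coxeter group of type `Aₙ`. -/
def simpleGen (n : ℕ) (i : Fin n) : Equiv.Perm (Fin (n + 1)) :=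
  Equiv.swap i.castSucc i.succ

/-- The Coxeter element `c = s₁ s₂ ⋯ sₙ` of `S_{n+1}`. -/
def coxeterA (n : ℕ) : Equiv.Perm (Fin (n + 1)) :=
  (List.ofFn fun i : Fin n => simpleGen n i).prod

open Equiv Equiv.Perm Finset

namespace Equiv.Perm

variable {α : Type*} {σ ρ : Perm α} {a b x y : α}

theorem sameCycle_pow_apply (σ : Perm α) (x : α) (k : ℕ) : σ.SameCycle x ((σ ^ k) x) :=
  sameCycle_pow_right.2 .rfl

theorem pow_apply_eq_pow_apply_of_forall_lt {k : ℕ}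
    (h : ∀ i < k, ρ ((σ ^ i) x) = σ ((σ ^ i) x)) : (ρ ^ k) x = (σ ^ k) x := by
  induction k with
  | zero => rfl
  | succ k ih =>
    rw [pow_succ', mul_apply, ih fun i hi => h i (by omega), h k (by omega), pow_succ', mul_apply]

theorem pow_apply_ne_self_of_forall_lt {k j : ℕ} (hmin : ∀ i < k, (σ ^ i) x ≠ (σ ^ k) x)
    (hj : 1 ≤ j) (hjk : j ≤ k) : (σ ^ j) x ≠ x := fun h =>
  hmin (k - j) (by omega) <| by
    rw [← Nat.sub_add_cancel hjk, pow_add, mul_apply, h, Nat.sub_add_cancel hjk]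

section Finite

variable [Finite α]

theorem SameCycle.exists_pow_eq_minimal (h : σ.SameCycle x y) :
    ∃ k : ℕ, (σ ^ k) x = y ∧ ∀ i < k, (σ ^ i) x ≠ y := by
  classical
  have hex := h.exists_nat_pow_eq
  exact ⟨Nat.find hex, Nat.find_spec hex, fun i hi => Nat.find_min hex hi⟩

theorem SameCycle.mem_of_mapsTo {s : Set α} (hs : Set.MapsTo σ s s) (h : σ.SameCycle x y)
    (hx : x ∈ s) : y ∈ s := by
  obtain ⟨k, rfl⟩ := h.exists_nat_pow_eq
  rw [coe_pow]
  exact hs.iterate k hx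

theorem sameCycle_iff_of_eqOn {s : Set α} (hs : Set.MapsTo σ s s) (h : Set.EqOn ρ σ s)
    (hx : x ∈ s) : ρ.SameCycle x y ↔ σ.SameCycle x y := by
  have hpow (k : ℕ) : (ρ ^ k) x = (σ ^ k) x :=
    pow_apply_eq_pow_apply_of_forall_lt fun i _ =>
      h ((sameCycle_pow_apply σ x i).mem_of_mapsTo hs hx)
  constructor <;> intro hxy <;> obtain ⟨k, rfl⟩ := hxy.exists_nat_pow_eq
  · exact hpow k ▸ sameCycle_pow_apply σ x k
  · exact hpow k ▸ sameCycle_pow_apply ρ x k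

variable [DecidableEq α]

theorem sameCycle_mul_swap_of_not_sameCycle (hab : ¬σ.SameCycle a b) :
    (σ * swap a b).SameCycle a b := by
  obtain ⟨k, hk, hmin⟩ := (sameCycle_apply_left.2 (SameCycle.refl σ a)).exists_pow_eq_minimal
  have hagree : ((σ * swap a b) ^ k) (σ a) = (σ ^ k) (σ a) :=
    pow_apply_eq_pow_apply_of_forall_lt fun i hi => by
      have hb : (σ ^ i) (σ a) ≠ b := fun h =>
        hab (h ▸ sameCycle_apply_left.1 (sameCycle_pow_apply σ (σ a) i))
      rw [mul_apply, swap_apply_of_ne_of_ne (hmin i hi) hb]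
  have hσa : (σ * swap a b).SameCycle (σ a) a := by
    simpa [hagree, hk] using sameCycle_pow_apply (σ * swap a b) (σ a) k
  have hbσa : (σ * swap a b).SameCycle b (σ a) := ⟨1, by simp⟩
  exact (hbσa.trans hσa).symm

theorem not_sameCycle_mul_swap_of_sameCycle (h : σ.SameCycle a b) (hab : a ≠ b) :
    ¬(σ * swap a b).SameCycle a b := by
  obtain ⟨k, hk, hmin⟩ := h.exists_pow_eq_minimal
  have hk0 : k ≠ 0 := by rintro rfl; exact hab hk
  -- the orbit segment `σ a, σ² a, …, σᵏ a = b` is closed under `σ * swap a b` and avoids `a`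
  set T : Set α := {y | ∃ i, 1 ≤ i ∧ i ≤ k ∧ (σ ^ i) a = y}
  have haT : a ∉ T := by
    rintro ⟨i, hi1, hik, hi⟩
    exact pow_apply_ne_self_of_forall_lt (hk ▸ hmin) hi1 hik hi
  have hT : Set.MapsTo (σ * swap a b) T T := by
    rintro _ ⟨i, hi1, hik, rfl⟩
    rcases hik.lt_or_eq with hlt | rfl
    · refine ⟨i + 1, by omega, hlt, ?_⟩
      rw [mul_apply, swap_apply_of_ne_of_ne (fun h => haT ⟨i, hi1, hik, h⟩) (hmin i hlt),
        pow_succ', mul_apply]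
    · exact ⟨1, le_rfl, by omega, by rw [mul_apply, hk, swap_apply_right, pow_one]⟩
  exact fun hρ => haT (hρ.symm.mem_of_mapsTo hT ⟨k, by omega, le_rfl, hk⟩)

theorem SameCycle.sameCycle_or_sameCycle_of_mul_swap (h : (σ * swap a b).SameCycle a y) :
    σ.SameCycle a y ∨ σ.SameCycle b y := by
  let s : Set α := {y | σ.SameCycle a y ∨ σ.SameCycle b y}
  have hs : Set.MapsTo (σ * swap a b) s s := by
    intro z hz
    simp only [s, mul_apply, Set.mem_ofPred_eq, sameCycle_apply_right] at hz ⊢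
    rcases eq_or_ne z a with rfl | hza
    · rw [swap_apply_left]; exact Or.inr .rfl
    rcases eq_or_ne z b with rfl | hzb
    · rw [swap_apply_right]; exact Or.inl .rfl
    rwa [swap_apply_of_ne_of_ne hza hzb]
  exact h.mem_of_mapsTo (s := s) hs (Or.inl .rfl)

theorem sameCycle_mul_swap_iff_of_not_sameCycle (hab : ¬σ.SameCycle a b)
    (hx : ¬(σ * swap a b).SameCycle a x) : (σ * swap a b).SameCycle x y ↔ σ.SameCycle x y := by
  have hρab := sameCycle_mul_swap_of_not_sameCycle hab
  refine (sameCycle_iff_of_eqOn (s := {z | ¬(σ * swap a b).SameCycle a z}) (fun z hz => ?_)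
    (fun z hz => ?_) hx).symm
  · exact mt sameCycle_apply_right.1 hz
  · have hza : z ≠ a := by rintro rfl; exact hz .rfl
    have hzb : z ≠ b := by rintro rfl; exact hz hρab
    rw [mul_apply, swap_apply_of_ne_of_ne hza hzb]

end Finite

section Fintype

variable [Fintype α] [DecidableEq α]

def cycleOrbit (σ : Perm α) (x : α) : Finset α := {y | σ.SameCycle x y}

-- Fixed points count as cycles, unlike in `Equiv.Perm.cycleType`.
def numCycles (σ : Perm α) : ℕ := (univ.image σ.cycleOrbit).card

theorem mem_cycleOrbit : y ∈ σ.cycleOrbit x ↔ σ.SameCycle x y := by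
  simp [cycleOrbit]

theorem cycleOrbit_eq_iff : σ.cycleOrbit x = σ.cycleOrbit y ↔ σ.SameCycle x y := by
  refine ⟨fun h => by rw [← mem_cycleOrbit, h, mem_cycleOrbit], fun h => ?_⟩
  ext z
  simp only [mem_cycleOrbit]
  exact ⟨h.symm.trans, h.trans⟩

theorem image_cycleOrbit_eq_insert (A : Finset α)
    (h : ∀ z ∉ A, σ.SameCycle a z ∨ σ.SameCycle b z) :
    univ.image σ.cycleOrbit =
      insert (σ.cycleOrbit a) (insert (σ.cycleOrbit b) (A.image σ.cycleOrbit)) := by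
  ext O
  simp only [mem_image, mem_univ, true_and, mem_insert]
  constructor
  · rintro ⟨z, rfl⟩
    by_cases hz : z ∈ A
    · exact Or.inr (Or.inr ⟨z, hz, rfl⟩)
    · rcases h z hz with h | h
      · exact Or.inl (cycleOrbit_eq_iff.2 h).symm
      · exact Or.inr (Or.inl (cycleOrbit_eq_iff.2 h).symm)
  · rintro (rfl | rfl | ⟨z, -, rfl⟩) <;> exact ⟨_, rfl⟩

theorem numCycles_mul_swap_add_one (hab : ¬σ.SameCycle a b) :
    (σ * swap a b).numCycles + 1 = σ.numCycles := by
  set ρ := σ * swap a b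
  have hρab : ρ.SameCycle a b := sameCycle_mul_swap_of_not_sameCycle hab
  set A : Finset α := {z | ¬ρ.SameCycle a z}
  have hA {z} : z ∈ A ↔ ¬ρ.SameCycle a z := by simp [A]
  have hAσ {z} (hz : z ∈ A) (y : α) : ρ.SameCycle z y ↔ σ.SameCycle z y :=
    sameCycle_mul_swap_iff_of_not_sameCycle hab (hA.1 hz)
  have hσ := image_cycleOrbit_eq_insert A fun z hz =>
    SameCycle.sameCycle_or_sameCycle_of_mul_swap (not_not.1 (mt hA.2 hz))
  have hρ := image_cycleOrbit_eq_insert (σ := ρ) (b := a) A fun z hz =>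
    Or.inl (not_not.1 (mt hA.2 hz))
  rw [insert_idem] at hρ
  have hσa : σ.cycleOrbit a ∉ insert (σ.cycleOrbit b) (A.image σ.cycleOrbit) := by
    simp only [mem_insert, mem_image, cycleOrbit_eq_iff, not_or, not_exists, not_and]
    refine ⟨hab, fun z hz h => hA.1 hz ?_⟩
    rw [sameCycle_comm, hAσ hz]; exact h
  have hσb : σ.cycleOrbit b ∉ A.image σ.cycleOrbit := by
    simp only [mem_image, cycleOrbit_eq_iff, not_exists, not_and]
    refine fun z hz h => hA.1 hz (hρab.trans ?_)
    rw [sameCycle_comm, hAσ hz]; exact h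
  have hρa : ρ.cycleOrbit a ∉ A.image ρ.cycleOrbit := by
    simp only [mem_image, cycleOrbit_eq_iff, not_exists, not_and]
    exact fun z hz h => hA.1 hz h.symm
  have hAorbit : A.image ρ.cycleOrbit = A.image σ.cycleOrbit :=
    image_congr fun z hz => by ext y; simp [mem_cycleOrbit, hAσ hz]
  rw [numCycles, numCycles, hσ, hρ, card_insert_of_notMem hρa, card_insert_of_notMem hσa,
    card_insert_of_notMem hσb, hAorbit]

theorem numCycles_mul_swap_of_sameCycle (h : σ.SameCycle a b) (hab : a ≠ b) :
    (σ * swap a b).numCycles = σ.numCycles + 1 := by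
  have := numCycles_mul_swap_add_one (not_sameCycle_mul_swap_of_sameCycle h hab)
  rw [mul_assoc, swap_mul_self, mul_one] at this
  exact this.symm

theorem numCycles_le_numCycles_mul_swap_add_one (σ : Perm α) (a b : α) :
    σ.numCycles ≤ (σ * swap a b).numCycles + 1 := by
  rcases eq_or_ne a b with rfl | hab
  · rw [swap_self, ← one_def, mul_one]; omega
  by_cases h : σ.SameCycle a b
  · rw [numCycles_mul_swap_of_sameCycle h hab]; omega
  · rw [← numCycles_mul_swap_add_one h]

theorem numCycles_le_numCycles_mul_prod_add_length (σ : Perm α) {l : List (Perm α)}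
    (hl : ∀ t ∈ l, t.IsSwap) : σ.numCycles ≤ (σ * l.prod).numCycles + l.length := by
  induction l generalizing σ with
  | nil => simp
  | cons t l ih =>
    obtain ⟨a, b, -, rfl⟩ := hl t List.mem_cons_self
    have h₁ := numCycles_le_numCycles_mul_swap_add_one σ a b
    have h₂ := ih (σ * swap a b) fun t ht => hl t (List.mem_cons_of_mem _ ht)
    rw [List.prod_cons, ← mul_assoc, List.length_cons]
    omega

theorem numCycles_one : (1 : Perm α).numCycles = Fintype.card α := by
  have h (x : α) : (1 : Perm α).cycleOrbit x = {x} := by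
    ext y; simp [mem_cycleOrbit, eq_comm]
  rw [numCycles, funext h, card_image_of_injective _ singleton_injective, card_univ]

theorem numCycles_le_card (σ : Perm α) : σ.numCycles ≤ Fintype.card α :=
  card_image_le

theorem exists_numCycles_mul_swap_eq_add_one (hσ : σ ≠ 1) :
    ∃ a b, a ≠ b ∧ (σ * swap a b).numCycles = σ.numCycles + 1 := by
  obtain ⟨x, hx⟩ : ∃ x, σ x ≠ x := by
    by_contra! h
    exact hσ (Equiv.ext h)
  exact ⟨x, σ x, hx.symm, numCycles_mul_swap_of_sameCycle ⟨1, rfl⟩ hx.symm⟩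

theorem exists_swaps_prod_eq_length_add_numCycles (σ : Perm α) :
    ∃ l : List (Perm α), (∀ t ∈ l, t.IsSwap) ∧ l.prod = σ ∧
      l.length + σ.numCycles = Fintype.card α := by
  by_cases hσ : σ = 1
  · exact ⟨[], by simp, by simp [hσ], by simp [hσ, numCycles_one]⟩
  obtain ⟨a, b, hab, hnum⟩ := exists_numCycles_mul_swap_eq_add_one hσ
  have := numCycles_le_card (σ * swap a b)
  obtain ⟨l, hl, hprod, hlen⟩ := exists_swaps_prod_eq_length_add_numCycles (σ * swap a b)
  refine ⟨l ++ [swap a b], ?_, by simp [hprod, mul_assoc], by simp; omega⟩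
  simp only [List.mem_append, List.mem_singleton]
  rintro t (ht | rfl)
  · exact hl t ht
  · exact ⟨a, b, hab, rfl⟩
termination_by Fintype.card α - σ.numCycles

end Fintype

end Equiv.Perm

section AbsoluteLength

variable {α : Type*} [Fintype α] [DecidableEq α]

theorem absLength_le {σ : Perm α} {l : List (Perm α)} (hl : ∀ t ∈ l, t.IsSwap) (h : l.prod = σ) :
    absLength σ ≤ l.length :=
  Nat.sInf_le ⟨l, rfl, hl, h⟩

theorem exists_swaps_prod_eq_length_eq_absLength (σ : Perm α) :
    ∃ l : List (Perm α), l.length = absLength σ ∧ (∀ t ∈ l, t.IsSwap) ∧ l.prod = σ := by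
  obtain ⟨l, hl, hprod, -⟩ := exists_swaps_prod_eq_length_add_numCycles σ
  exact Nat.sInf_mem
    (s := {k | ∃ l : List (Perm α), l.length = k ∧ (∀ t ∈ l, t.IsSwap) ∧ l.prod = σ})
    ⟨l.length, l, rfl, hl, hprod⟩

theorem absLength_add_numCycles (σ : Perm α) : absLength σ + σ.numCycles = Fintype.card α := by
  obtain ⟨l, hlen, hl, hprod⟩ := exists_swaps_prod_eq_length_eq_absLength σ
  obtain ⟨l', hl', hprod', hlen'⟩ := exists_swaps_prod_eq_length_add_numCycles σ
  have h₁ := numCycles_le_numCycles_mul_prod_add_length 1 hl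
  rw [one_mul, hprod, numCycles_one] at h₁
  have h₂ := absLength_le hl' hprod'
  omega

end AbsoluteLength

section Circular

variable {α : Type*} [CircularOrder α] {a b c y : α}

theorem sbtw_of_not_sbtw (hab : a ≠ b) (hbc : b ≠ c) (hca : c ≠ a) (h : ¬sbtw b a c) :
    sbtw a b c := by
  rw [← btw_iff_not_sbtw] at h
  rw [sbtw_iff_btw_not_btw]
  refine ⟨h.cyclic_left, fun h' => ?_⟩
  rcases h.cyclic_left.antisymm h' with h | h | h <;> contradiction

theorem SBtw.sbtw.sbtw_or_sbtw (hy : sbtw a y c) (hb : sbtw a b c) (hyb : y ≠ b) :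
    sbtw a y b ∨ sbtw b y c := by
  by_contra! h
  have hya : y ≠ a := by rintro rfl; exact sbtw_irrefl_left hy
  have hcy : c ≠ y := by rintro rfl; exact sbtw_irrefl_right hy
  have hab : a ≠ b := by rintro rfl; exact sbtw_irrefl_left hb
  have hbc : b ≠ c := by rintro rfl; exact sbtw_irrefl_right hb
  -- seen from `y`, the three points would come in the order `a, b, c`
  have hyac : sbtw y a c :=
    sbtw_trans_right (sbtw_of_not_sbtw hya hab hyb.symm h.1) (sbtw_of_not_sbtw hyb hbc hcy h.2)
  exact sbtw_asymm (sbtw_cyclic_left hyac) (sbtw_cyclic_left hy)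

end Circular

namespace Equiv.Perm

variable {α : Type*} [CircularOrder α] {σ : Perm α} {a b x y z : α}

/-- The cycles of `σ` are pairwise noncrossing and each of them runs once around the circle. -/
def IsNoncrossing (σ : Perm α) : Prop :=
  ∀ x y, sbtw x y (σ x) → sbtw x (σ y) (σ x)

section Finite

variable [Finite α]

theorem IsNoncrossing.sbtw_of_sameCycle (hσ : σ.IsNoncrossing) (hy : sbtw x y (σ x))
    (hyz : σ.SameCycle y z) : sbtw x z (σ x) :=
  hyz.mem_of_mapsTo (s := {y | sbtw x y (σ x)}) (hσ x) hy

theorem IsNoncrossing.not_sbtw_of_sameCycle (hσ : σ.IsNoncrossing) (h : σ.SameCycle x y) :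
    ¬sbtw x y (σ x) :=
  fun hy => sbtw_irrefl_left (hσ.sbtw_of_sameCycle hy h.symm)

theorem IsNoncrossing.sbtw_apply_of_pow (hσ : σ.IsNoncrossing) (k : ℕ)
    (hk : ∀ j, 1 ≤ j → j ≤ k + 1 → (σ ^ j) a ≠ a) (hy : y = a ∨ sbtw a y (σ ((σ ^ k) a)))
    (hyk : y ≠ (σ ^ k) a) : sbtw a (σ y) (σ ((σ ^ k) a)) := by
  induction k generalizing y with
  | zero =>
    rw [pow_zero, one_apply] at hy hyk ⊢
    exact hσ a y (hy.resolve_left hyk)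
  | succ k ih =>
    -- with `b = σᵏ⁺¹ a`, the arc from `a` to `σ b` is the arc from `a` to `b`, then `b`, then the
    -- arc from `b` to `σ b`
    set b := (σ ^ (k + 1)) a
    have hb : σ ((σ ^ k) a) = b := by rw [← mul_apply, ← pow_succ']
    have hab : a ≠ b := (hk (k + 1) (by omega) (by omega)).symm
    have hσba : σ b ≠ a := by
      rw [← mul_apply, ← pow_succ']; exact hk (k + 2) (by omega) le_rfl
    have hσb : σ b ≠ b := fun h => hk 1 le_rfl (by omega) <| by
      rw [pow_one]; exact (sameCycle_pow_apply σ a _).apply_eq_self_iff.2 h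
    have habσb : sbtw a b (σ b) := sbtw_of_not_sbtw hab hσb.symm hσba
      (hσ.not_sbtw_of_sameCycle (sameCycle_pow_apply σ a (k + 1)).symm)
    have ih' {y} (hy : y = a ∨ sbtw a y b) (hyk : y ≠ (σ ^ k) a) : sbtw a (σ y) b :=
      hb ▸ ih (fun j hj hjk => hk j hj (by omega)) (hb ▸ hy) hyk
    by_cases hyb : y = (σ ^ k) a
    · rw [hyb, hb]; exact habσb
    rcases hy with rfl | hy
    · exact sbtw_trans_right (ih' (Or.inl rfl) hyb) habσb
    rcases hy.sbtw_or_sbtw habσb hyk with hy | hy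
    · exact sbtw_trans_right (ih' (Or.inr hy) hyb) habσb
    · exact habσb.trans_left (hσ b y hy)

variable [DecidableEq α]

theorem IsNoncrossing.sbtw_apply_swap_left (hσ : σ.IsNoncrossing) (h : σ.SameCycle a b)
    (hab : a ≠ b) (hy : sbtw a y (σ b)) : sbtw a (σ (swap a b y)) (σ b) := by
  obtain ⟨k, rfl, hmin⟩ := h.exists_pow_eq_minimal
  have hk (j : ℕ) (hj : 1 ≤ j) (hjk : j ≤ k + 1) : (σ ^ j) a ≠ a := by
    rcases hjk.lt_or_eq with hjk | rfl
    · exact pow_apply_ne_self_of_forall_lt hmin hj (by omega)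
    · rw [pow_succ', mul_apply]
      exact fun h => sbtw_irrefl_left_right (h ▸ hy)
  have hya : y ≠ a := by rintro rfl; exact sbtw_irrefl_left hy
  by_cases hyb : y = (σ ^ k) a
  · rw [hyb, swap_apply_right]; exact hσ.sbtw_apply_of_pow k hk (Or.inl rfl) hab
  · rw [swap_apply_of_ne_of_ne hya hyb]; exact hσ.sbtw_apply_of_pow k hk (Or.inr hy) hyb

theorem IsNoncrossing.mul_swap (hσ : σ.IsNoncrossing) (h : σ.SameCycle a b) (hab : a ≠ b) :
    (σ * swap a b).IsNoncrossing := by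
  intro x y hy
  simp only [mul_apply] at hy ⊢
  rcases eq_or_ne x a with rfl | hxa
  · rw [swap_apply_left] at hy ⊢; exact hσ.sbtw_apply_swap_left h hab hy
  rcases eq_or_ne x b with rfl | hxb
  · rw [swap_comm, swap_apply_left] at hy ⊢; exact hσ.sbtw_apply_swap_left h.symm hab.symm hy
  rw [swap_apply_of_ne_of_ne hxa hxb] at hy ⊢
  rcases eq_or_ne y a with rfl | hya
  · rw [swap_apply_left]; exact hσ x b (hσ.sbtw_of_sameCycle hy h)
  rcases eq_or_ne y b with rfl | hyb
  · rw [swap_apply_right]; exact hσ x a (hσ.sbtw_of_sameCycle hy h.symm)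
  rw [swap_apply_of_ne_of_ne hya hyb]; exact hσ x y hy

end Finite

variable [Fintype α] [DecidableEq α]

theorem IsNoncrossing.of_mul_prod_eq {γ : Perm α} (hγ : γ.IsNoncrossing) {l : List (Perm α)}
    (hl : ∀ t ∈ l, t.IsSwap) (hprod : σ * l.prod = γ)
    (hnum : γ.numCycles + l.length ≤ σ.numCycles) : σ.IsNoncrossing := by
  induction l generalizing σ with
  | nil =>
    rw [List.prod_nil, mul_one] at hprod
    exact hprod ▸ hγ
  | cons t l ih =>
    obtain ⟨a, b, hab, rfl⟩ := hl t List.mem_cons_self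
    have hl' : ∀ t ∈ l, t.IsSwap := fun t ht => hl t (List.mem_cons_of_mem _ ht)
    rw [List.prod_cons, ← mul_assoc] at hprod
    have h₁ := numCycles_le_numCycles_mul_prod_add_length (σ * swap a b) hl'
    have h₂ := numCycles_le_numCycles_mul_swap_add_one σ a b
    rw [hprod] at h₁
    rw [List.length_cons] at hnum
    -- passing from `σ * swap a b` back to `σ` raises the number of cycles, so it splits a cycle
    have hsplit : (σ * swap a b).SameCycle a b := by
      by_contra hn
      have := numCycles_mul_swap_add_one hn
      rw [mul_assoc, swap_mul_self, mul_one] at this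
      omega
    have := (ih hl' hprod (by omega)).mul_swap hsplit hab
    rwa [mul_assoc, swap_mul_self, mul_one] at this

theorem IsNoncrossing.of_absLe {γ : Perm α} (hγ : γ.IsNoncrossing) (h : absLe σ γ) :
    σ.IsNoncrossing := by
  obtain ⟨l, hlen, hl, hprod⟩ := exists_swaps_prod_eq_length_eq_absLength (σ⁻¹ * γ)
  refine hγ.of_mul_prod_eq hl (by rw [hprod, mul_inv_cancel_left]) ?_
  have := absLength_add_numCycles σ
  have := absLength_add_numCycles γ
  rw [absLe] at h
  omega

end Equiv.Perm

section TypeA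

variable {n : ℕ}

theorem Fin.val_cycleRange_apply {m : ℕ} (i j : Fin m) :
    (Fin.cycleRange i j : ℕ) = if j < i then (j : ℕ) + 1 else if j = i then 0 else (j : ℕ) := by
  rcases lt_trichotomy j i with h | rfl | h
  · simp [h, Fin.coe_cycleRange_of_lt h]
  · simp [Fin.coe_cycleRange_of_le le_rfl]
  · simp [h.not_gt, h.ne', Fin.cycleRange_of_gt h]

theorem val_simpleGen_apply (j : Fin n) (x : Fin (n + 1)) :
    (simpleGen n j x : ℕ) =
      if (x : ℕ) = j then (j : ℕ) + 1 else if (x : ℕ) = (j : ℕ) + 1 then (j : ℕ) else (x : ℕ) := by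
  unfold simpleGen
  rcases eq_or_ne x j.castSucc with rfl | h₁
  · simp
  rcases eq_or_ne x j.succ with rfl | h₂
  · simp
  have h₁' : (x : ℕ) ≠ j := fun h => h₁ (Fin.ext h)
  have h₂' : (x : ℕ) ≠ j + 1 := fun h => h₂ (Fin.ext h)
  rw [swap_apply_of_ne_of_ne h₁ h₂, if_neg h₁', if_neg h₂']

theorem prod_ofFn_simpleGen_castLE (k : ℕ) (hk : k ≤ n) :
    (List.ofFn fun i : Fin k => simpleGen n (Fin.castLE hk i)).prod =
      Fin.cycleRange (⟨k, by omega⟩ : Fin (n + 1)) := by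
  induction k with
  | zero => simp
  | succ k ih =>
    rw [List.ofFn_succ', List.concat_eq_append, List.prod_append, List.prod_singleton]
    simp only [Fin.castLE_castSucc]
    rw [ih (by omega)]
    ext x
    simp only [mul_apply, Fin.val_cycleRange_apply, val_simpleGen_apply, Fin.lt_def, Fin.ext_iff,
      Fin.val_castLE, Fin.val_last]
    split_ifs <;> omega

theorem coxeterA_eq_finRotate : coxeterA n = finRotate (n + 1) := by
  rw [coxeterA, ← Fin.cycleRange_last]
  exact prod_ofFn_simpleGen_castLE n le_rfl

theorem isNoncrossing_finRotate : (finRotate (n + 1)).IsNoncrossing := by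
  intro x y h
  simp only [Fin.sbtw_iff, Fin.lt_def, coe_finRotate] at h
  have := y.isLt
  split_ifs at h with hx
  · rw [hx, Fin.val_last] at h; omega
  · omega

theorem Equiv.Perm.IsNoncrossing.apply_le_iff {σ : Perm (Fin (n + 1))} (hσ : σ.IsNoncrossing)
    {m : Fin (n + 1)} (hm : σ.SameCycle 0 m) (hmax : ∀ y, σ.SameCycle 0 y → y ≤ m)
    (x : Fin (n + 1)) : σ x ≤ m ↔ x ≤ m := by
  by_cases hx : σ.SameCycle 0 x
  · exact iff_of_true (hmax _ (sameCycle_apply_right.2 hx)) (hmax x hx)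
  have hσx : ¬σ.SameCycle 0 (σ x) := mt sameCycle_apply_right.1 hx
  -- the arc from `x` to `σ x` contains the whole cycle of `0` or none of it
  have key : sbtw x 0 (σ x) ↔ sbtw x m (σ x) :=
    ⟨fun h => hσ.sbtw_of_sameCycle h hm, fun h => hσ.sbtw_of_sameCycle h hm.symm⟩
  have h0 : x ≠ 0 := by rintro rfl; exact hx .rfl
  have h0' : σ x ≠ 0 := by intro h; exact hσx (h ▸ .rfl)
  have hm' : x ≠ m := by rintro rfl; exact hx hm
  have hm'' : σ x ≠ m := by intro h; exact hσx (h ▸ hm)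
  simp only [Fin.sbtw_iff, Fin.lt_def, Fin.le_def, ne_eq, Fin.ext_iff, Fin.val_zero]
    at key h0 h0' hm' hm'' ⊢
  omega

theorem mem_orbit_closure_simpleGen_ne {i : Fin n} {u v : Fin (n + 1)} (huv : u ≤ v)
    (hside : u ≤ i.castSucc ↔ v ≤ i.castSucc) :
    v ∈ MulAction.orbit (Subgroup.closure (simpleGen n '' {j | j ≠ i})) u := by
  induction v using Fin.induction with
  | zero => rw [Fin.le_zero_iff.1 huv]; exact MulAction.mem_orbit_self _
  | succ w ih =>
    rcases huv.lt_or_eq with hlt | rfl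
    · have hw : u ≤ w.castSucc := Fin.le_castSucc_iff.2 hlt
      have hwi : w ≠ i := by
        rintro rfl
        exact (Fin.castSucc_lt_succ (i := w)).not_ge (hside.1 hw)
      have hside' : u ≤ i.castSucc ↔ w.castSucc ≤ i.castSucc := by
        rw [hside, Fin.castSucc_le_castSucc_iff]
        simp only [Fin.le_def, Fin.val_succ, Fin.val_castSucc] at hside ⊢
        omega
      have := MulAction.mem_orbit_of_mem_orbit
        (⟨simpleGen n w, Subgroup.subset_closure ⟨w, hwi, rfl⟩⟩ :
          Subgroup.closure (simpleGen n '' {j | j ≠ i})) (ih hw hside')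
      simpa [Subgroup.smul_def, Perm.smul_def, simpleGen] using this
    · exact MulAction.mem_orbit_self _

theorem mem_closure_simpleGen_ne_iff (i : Fin n) (π : Perm (Fin (n + 1))) :
    π ∈ Subgroup.closure (simpleGen n '' {j | j ≠ i}) ↔
      ∀ x, π x ≤ i.castSucc ↔ x ≤ i.castSucc := by
  have hS : ∀ f ∈ simpleGen n '' {j | j ≠ i}, f.IsSwap := by
    rintro _ ⟨j, -, rfl⟩
    exact ⟨_, _, (Fin.castSucc_lt_succ (i := j)).ne, rfl⟩
  refine ⟨fun hπ x => ?_, fun h => (mem_closure_isSwap hS).2 ⟨Set.toFinite _, fun x => ?_⟩⟩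
  · induction hπ using Subgroup.closure_induction generalizing x with
    | mem f hf =>
      obtain ⟨j, hj, rfl⟩ := hf
      have hji : (j : ℕ) ≠ i := fun h => hj (Fin.ext h)
      simp only [Fin.le_def, Fin.val_castSucc, val_simpleGen_apply]
      split_ifs <;> omega
    | one => rfl
    | mul f g _ _ hf hg => rw [mul_apply, hf, hg]
    | inv f _ hf => rw [← hf (f⁻¹ x), ← mul_apply, mul_inv_cancel, one_apply]
  · rcases le_total x (π x) with hle | hle
    · exact mem_orbit_closure_simpleGen_ne hle (h x).symm
    · exact MulAction.mem_orbit_symm.1 (mem_orbit_closure_simpleGen_ne hle (h x))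

end TypeA

/-- A noncrossing partition of the Coxeter group of type `Aₙ` (an element
`π ≤_T c` of `S_{n+1}`) is positive, i.e. not contained in any proper standard
parabolic subgroup `W_{S \ {sᵢ}}`, if and only if in the corresponding classical
noncrossing partition of `{1, …, n+1}` (given by the cycles of `π`) the elements
`1` and `n+1` lie in the same block, i.e. in the same cycle of `π`. -/
theorem stmt0 (n : ℕ) (π : Equiv.Perm (Fin (n + 1))) (hπ : absLe π (coxeterA n)) :
    (∀ i : Fin n, π ∉ Subgroup.closure (simpleGen n '' {j | j ≠ i})) ↔
      π.SameCycle 0 (Fin.last n) := by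
  simp only [mem_closure_simpleGen_ne_iff]
  constructor
  · intro hpos
    by_contra hlast
    have hnc : π.IsNoncrossing := (coxeterA_eq_finRotate ▸ isNoncrossing_finRotate).of_absLe hπ
    obtain ⟨m, hm, hmax⟩ := (π.cycleOrbit 0).exists_max_image id ⟨0, mem_cycleOrbit.2 .rfl⟩
    rw [mem_cycleOrbit] at hm
    have hmn : (m : ℕ) < n :=
      lt_of_le_of_ne (Nat.lt_succ_iff.1 m.isLt) fun h => hlast ((Fin.ext h : m = Fin.last n) ▸ hm)
    exact hpos ⟨m, hmn⟩ (hnc.apply_le_iff hm fun y hy => hmax y (mem_cycleOrbit.2 hy))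
  · intro hlast i hi
    exact (Fin.castSucc_lt_last i).not_ge <|
      hlast.mem_of_mapsTo (s := {x | x ≤ i.castSucc}) (fun x hx => (hi x).2 hx) (Fin.zero_le _)
end

section
/- Let Q be a Dynkin quiver and E(Q) the fundamental domain in D^b(Q) consisting of indecomposable modules together with shifts M[1] of indecomposable noninjective modules M. For any X, Y in E(Q): (a) Hom_{D^b(Q)}(X, τ^k Y[2k]) = 0 for all integers k other than 0 and 1; (b) Hom_{D^b(Q)}(X, τ^k Y[2k]) is nonzero for at most one value of k. -/
/-!
`τ` preserves the degree except on projectives, where `τ P = I[-1]`; dually `τ⁻¹` raises the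
degree only on injectives. Hence the degree of `τᵏ Y[2k]` grows at least like `k` for `k > 0`
and falls at least like `|k|` for `k < 0`, while a nonzero map out of `X` needs that degree to be
`deg X` or `deg X + 1`, the latter only for a noninjective target. For `X, Y ∈ E(Q)` this leaves
`k ∈ {0, 1}`, and both cannot occur: `Y` and `τ Y[2]` lie two degrees apart unless `τ Y[2]` is an
injective in degree `deg Y + 1`.
-/

/-- An axiomatic combinatorial model of the bounded derived category `D^b(Q)` of
a simply laced Dynkin quiver `Q` with `n` vertices over an algebraically closed
field `K`, recorded at the level of isomorphism classes of indecomposable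
objects.  Every indecomposable object of `D^b(Q)` is `M[i]` for a unique
indecomposable `KQ`-module `M` and degree `i`, and is modelled by the pair
`(M, i)`.  Hom- and Ext-spaces between modules are recorded via their
dimensions, and Hom-spaces in `D^b(Q)` are determined from them since `KQ` is
hereditary.  The Auslander–Reiten translation `τ` of `D^b(Q)` is part of the
data; the axioms record the standard facts about `Q` being of Dynkin type:
finitely many indecomposables, all rigid, the behaviour of `τ` on projectives
and on non-projective modules, the Auslander–Reiten (Serre duality) formulas,
and Gabriel-style facts about simples, projectives and injectives. -/
structure DynkinModel (n : ℕ) : Type 1 where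
  /-- isomorphism classes of indecomposable `KQ`-modules -/
  M : Type
  finite : Finite M
  /-- `homDim X Y = dim_K Hom_{KQ}(X, Y)` -/
  homDim : M → M → ℕ
  /-- `extDim X Y = dim_K Ext¹_{KQ}(X, Y)` -/
  extDim : M → M → ℕ
  /-- the dimension vector of a module -/
  dimv : M → Fin n → ℕ
  /-- the simple module at a vertex -/
  simple : Fin n → M
  /-- the indecomposable projective module at a vertex -/
  projective : Fin n → M
  /-- the indecomposable injective module at a vertex -/
  injective : Fin n → M
  /-- the Auslander–Reiten translation `τ` of `D^b(Q)`, a permutation of the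
  indecomposable objects -/
  tau : Equiv.Perm (M × ℤ)
  endo_pos : ∀ X, 0 < homDim X X
  rigid : ∀ X, extDim X X = 0
  simple_injective : Function.Injective simple
  simple_dimv : ∀ i j, dimv (simple i) j = if i = j then 1 else 0
  dimv_ne_zero : ∀ X, ∃ i, dimv X i ≠ 0
  hom_projective : ∀ i X, homDim (projective i) X = dimv X i
  hom_injective : ∀ i X, homDim X (injective i) = dimv X i
  ext_projective : ∀ i X, extDim (projective i) X = 0
  ext_injective : ∀ i X, extDim X (injective i) = 0
  tau_shift : ∀ X (i : ℤ), tau (X, i) = ((tau (X, 0)).1, (tau (X, 0)).2 + i)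
  tau_projective : ∀ i, tau (projective i, 0) = (injective i, -1)
  tau_module : ∀ X, (∀ i, X ≠ projective i) → (tau (X, 0)).2 = 0
  serre_mod : ∀ X Y, (∀ i, X ≠ projective i) → homDim X Y = extDim Y ((tau (X, 0)).1)
  ar_formula : ∀ X Y, (∀ i, X ≠ projective i) → extDim X Y = homDim Y ((tau (X, 0)).1)

namespace DynkinModel

variable {n : ℕ} (D : DynkinModel n)

/-- the shift functor `[k]` on indecomposable objects of `D^b(Q)` -/
def shf (X : D.M × ℤ) (k : ℤ) : D.M × ℤ := (X.1, X.2 + k)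

/-- the dimension of `Hom_{D^b(Q)}(X, Y)`; since `KQ` is hereditary this is a
Hom-space of modules if the degrees agree, an `Ext¹` if they differ by one, and
zero otherwise. -/
def dhom (X Y : D.M × ℤ) : ℕ :=
  if Y.2 = X.2 then D.homDim X.1 Y.1
  else if Y.2 = X.2 + 1 then D.extDim X.1 Y.1 else 0

/-- the fundamental domain `E(Q)` for the action of `τ[2]` on the
indecomposables of `D^b(Q)`: indecomposable modules (degree `0`) together with
the shifts `M[1]` of noninjective indecomposable modules (degree `1`).  The
indecomposable objects of the orbit category `C(Q) = D^b(Q)/τ[2]` are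
identified with `E(Q)`. -/
def fund : Set (D.M × ℤ) :=
  {X | X.2 = 0 ∨ (X.2 = 1 ∧ ∀ i, X.1 ≠ D.injective i)}

/-- `Hom_{C(Q)}(X, Y) ≠ 0` in the orbit category `C(Q) = D^b(Q)/τ[2]`, whose
Hom-spaces are `⨁ₖ Hom_{D^b(Q)}(X, τᵏ Y [2k])`. -/
def cHom (X Y : D.M × ℤ) : Prop :=
  ∃ k : ℤ, D.dhom X (D.shf ((D.tau ^ k) Y) (2 * k)) ≠ 0

/-- a Hom-free set of indecomposable objects of `C(Q)`: pairwise nonisomorphic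
indecomposables (identified with the fundamental domain) with all Hom-spaces
between distinct members vanishing -/
def HomFree (T : Set (D.M × ℤ)) : Prop :=
  T ⊆ D.fund ∧ ∀ X ∈ T, ∀ Y ∈ T, X ≠ Y → ¬ D.cHom X Y

/-- a Hom-configuration: a maximal Hom-free set in `C(Q)` -/
def HomConfig (T : Set (D.M × ℤ)) : Prop :=
  D.HomFree T ∧ ∀ T', D.HomFree T' → T ⊆ T' → T' = T

variable {D}

lemma tau_snd_eq_or (Z : D.M × ℤ) :
    (D.tau Z).2 = Z.2 ∨ ((D.tau Z).2 = Z.2 - 1 ∧ ∃ i, (D.tau Z).1 = D.injective i) := by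
  obtain ⟨A, d⟩ := Z
  rw [D.tau_shift A d]
  by_cases hA : ∃ i, A = D.projective i
  · obtain ⟨i, rfl⟩ := hA
    rw [D.tau_projective i]
    exact Or.inr ⟨by ring, i, rfl⟩
  · push Not at hA
    rw [D.tau_module A hA]
    exact Or.inl (zero_add d)

lemma tau_inv_snd_eq_or (Z : D.M × ℤ) :
    (D.tau⁻¹ Z).2 = Z.2 ∨ ((D.tau⁻¹ Z).2 = Z.2 + 1 ∧ ∃ i, Z.1 = D.injective i) := by
  have h := tau_snd_eq_or (D.tau⁻¹ Z)
  rw [show D.tau (D.tau⁻¹ Z) = Z from D.tau.apply_symm_apply Z] at h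
  rcases h with h | ⟨h, hinj⟩
  · exact Or.inl h.symm
  · exact Or.inr ⟨by omega, hinj⟩

lemma snd_sub_le_snd_tau_pow (Y : D.M × ℤ) (m : ℕ) : Y.2 - m ≤ ((D.tau ^ m) Y).2 := by
  induction m with
  | zero => simp
  | succ m ih =>
    rw [pow_succ', Equiv.Perm.mul_apply]
    have := tau_snd_eq_or ((D.tau ^ m) Y)
    omega

lemma snd_tau_inv_pow_le_add (Y : D.M × ℤ) (m : ℕ) : ((D.tau⁻¹ ^ m) Y).2 ≤ Y.2 + m := by
  induction m with
  | zero => simp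
  | succ m ih =>
    rw [pow_succ', Equiv.Perm.mul_apply]
    have := tau_inv_snd_eq_or ((D.tau⁻¹ ^ m) Y)
    omega

/-- Only `τ P = I[-1]` lowers the degree, so the bound of `snd_sub_le_snd_tau_pow` is attained
only if the last step of `τ^(m+1)` produced an injective. -/
lemma exists_injective_of_snd_tau_pow_succ (Y : D.M × ℤ) (m : ℕ)
    (h : ((D.tau ^ (m + 1)) Y).2 = Y.2 - (m + 1)) :
    ∃ i, ((D.tau ^ (m + 1)) Y).1 = D.injective i := by
  rw [pow_succ', Equiv.Perm.mul_apply] at h ⊢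
  have := snd_sub_le_snd_tau_pow Y m
  rcases tau_snd_eq_or ((D.tau ^ m) Y) with h' | ⟨-, hinj⟩
  · omega
  · exact hinj

lemma exists_injective_of_snd_tau_inv_pow_succ (Y : D.M × ℤ) (m : ℕ)
    (h : ((D.tau⁻¹ ^ (m + 1)) Y).2 = Y.2 + (m + 1)) :
    ∃ i, Y.1 = D.injective i := by
  rw [pow_succ, Equiv.Perm.mul_apply] at h
  have := snd_tau_inv_pow_le_add (D.tau⁻¹ Y) m
  rcases tau_inv_snd_eq_or Y with h' | ⟨-, hinj⟩
  · omega
  · exact hinj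

lemma snd_eq_of_dhom_ne_zero {X Z : D.M × ℤ} (h : D.dhom X Z ≠ 0) :
    Z.2 = X.2 ∨ (Z.2 = X.2 + 1 ∧ ∀ i, Z.1 ≠ D.injective i) := by
  unfold dhom at h
  split_ifs at h with h₀ h₁
  · exact Or.inl h₀
  · refine Or.inr ⟨h₁, fun i hi => h ?_⟩
    rw [hi, D.ext_injective]
  · exact absurd rfl h

lemma dhom_tau_zpow_eq_zero_of_two_le {X Y : D.M × ℤ} (hX : X ∈ D.fund) (hY : Y ∈ D.fund)
    {k : ℤ} (hk : 2 ≤ k) : D.dhom X (D.shf ((D.tau ^ k) Y) (2 * k)) = 0 := by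
  obtain ⟨m, rfl⟩ : ∃ m : ℕ, k = (m + 1 : ℕ) := ⟨k.toNat - 1, by omega⟩
  rw [zpow_natCast]
  by_contra h
  have hX₂ : X.2 ≤ 1 := by rcases hX with hX | ⟨hX, -⟩ <;> omega
  have hY₂ : 0 ≤ Y.2 := by rcases hY with hY | ⟨hY, -⟩ <;> omega
  have hle := snd_sub_le_snd_tau_pow Y (m + 1)
  rcases snd_eq_of_dhom_ne_zero h with h' | ⟨h', hni⟩ <;> simp only [shf] at h'
  · omega
  · obtain ⟨i, hi⟩ := exists_injective_of_snd_tau_pow_succ Y m (by omega)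
    exact hni i hi

lemma dhom_tau_zpow_eq_zero_of_neg {X Y : D.M × ℤ} (hX : X ∈ D.fund) (hY : Y ∈ D.fund)
    {k : ℤ} (hk : k < 0) : D.dhom X (D.shf ((D.tau ^ k) Y) (2 * k)) = 0 := by
  obtain ⟨m, rfl⟩ : ∃ m : ℕ, k = -(m + 1 : ℕ) := ⟨(-k).toNat - 1, by omega⟩
  rw [zpow_neg, zpow_natCast, ← inv_pow]
  by_contra h
  have hX₂ : 0 ≤ X.2 := by rcases hX with hX | ⟨hX, -⟩ <;> omega
  have hle := snd_tau_inv_pow_le_add Y (m + 1)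
  have hdeg : X.2 ≤ ((D.tau⁻¹ ^ (m + 1)) Y).2 - 2 * (m + 1 : ℕ) := by
    rcases snd_eq_of_dhom_ne_zero h with h' | ⟨h', -⟩ <;> simp only [shf] at h' <;> omega
  rcases hY with hY | ⟨hY, hYni⟩
  · omega
  · obtain ⟨i, hi⟩ := exists_injective_of_snd_tau_inv_pow_succ Y m (by omega)
    exact hYni i hi

lemma eq_zero_or_eq_one_of_dhom_tau_zpow_ne_zero {X Y : D.M × ℤ} (hX : X ∈ D.fund)
    (hY : Y ∈ D.fund) {k : ℤ} (h : D.dhom X (D.shf ((D.tau ^ k) Y) (2 * k)) ≠ 0) :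
    k = 0 ∨ k = 1 := by
  by_contra hk
  rcases lt_or_ge k 0 with hk' | hk'
  · exact h (dhom_tau_zpow_eq_zero_of_neg hX hY hk')
  · exact h (dhom_tau_zpow_eq_zero_of_two_le hX hY (by omega))

/-- If `τ Y` keeps the degree of `Y`, then `Y` and `τ Y[2]` lie two degrees apart; otherwise
`τ Y[2] = I[Y.2 + 1]` and `Ext¹(X, I) = 0`. -/
lemma dhom_eq_zero_or_dhom_tau_shf_two_eq_zero (X Y : D.M × ℤ) :
    D.dhom X Y = 0 ∨ D.dhom X (D.shf (D.tau Y) 2) = 0 := by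
  by_contra! h
  have h₀ := snd_eq_of_dhom_ne_zero h.1
  have h₁ := snd_eq_of_dhom_ne_zero h.2
  simp only [shf] at h₁
  rcases tau_snd_eq_or Y with hτ | ⟨hτ, i, hi⟩
  · omega
  · rcases h₁ with h₁ | ⟨h₁, hni⟩
    · omega
    · exact hni i hi

end DynkinModel

/-- For `X, Y` in the fundamental domain `E(Q)`:
(a) `Hom_{D^b(Q)}(X, τᵏ Y [2k]) = 0` for every integer `k ≠ 0, 1`;
(b) `Hom_{D^b(Q)}(X, τᵏ Y [2k])` is nonzero for at most one value of `k`. -/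
theorem stmt10 (n : ℕ) (D : DynkinModel n) (X Y : D.M × ℤ)
    (hX : X ∈ D.fund) (hY : Y ∈ D.fund) :
    (∀ k : ℤ, k ≠ 0 → k ≠ 1 → D.dhom X (D.shf ((D.tau ^ k) Y) (2 * k)) = 0) ∧
      (∀ k l : ℤ, D.dhom X (D.shf ((D.tau ^ k) Y) (2 * k)) ≠ 0 →
        D.dhom X (D.shf ((D.tau ^ l) Y) (2 * l)) ≠ 0 → k = l) := by
  refine ⟨fun k hk₀ hk₁ => ?_, fun k l hk hl => ?_⟩
  · by_contra h
    rcases D.eq_zero_or_eq_one_of_dhom_tau_zpow_ne_zero hX hY h with rfl | rfl <;> contradiction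
  · have hY₀ : D.shf ((D.tau ^ (0 : ℤ)) Y) (2 * 0) = Y := by simp [DynkinModel.shf]
    have hY₁ : D.shf ((D.tau ^ (1 : ℤ)) Y) (2 * 1) = D.shf (D.tau Y) 2 := by simp
    have h₀₁ := D.dhom_eq_zero_or_dhom_tau_shf_two_eq_zero X Y
    rcases D.eq_zero_or_eq_one_of_dhom_tau_zpow_ne_zero hX hY hk with rfl | rfl <;>
      rcases D.eq_zero_or_eq_one_of_dhom_tau_zpow_ne_zero hX hY hl with rfl | rfl <;>
      simp only [hY₀, hY₁] at hk hl <;> omega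
end
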